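/- arXiv:2504.05109 — 5 statements merged into one kernel-verified Lean document; each statement's English description precedes it below -/
import Mathlib

section
/- Let A ∈ ℝ^{m×n}, b ∈ ℝ^m, c ∈ ℝ^n, and let x̂ ∈ ℝ^n with A x̂ = b, x̂ ≥ 0. Let I = {i : x̂_i > 0} and Ī = {i : x̂_i = 0}. Suppose (δ*, y*, s*, ε*) satisfies: (1) a_i^T y* + ε*_i / x̂_i = c_i for i ∈ I; (2) a_i^T y* + s*_i = c_i with s*_i ≥ 0 for i ∈ Ī; (3) A δ* = 0; (4) δ*_i ≤ x̂_i for all i; (5) δ*_i s*_i = 0 for i ∈ Ī; (6) ε*_i (x̂_i - δ*_i) = 0 for i ∈ I; with ε* ≥ 0. Define x^{LP} = x̂ - δ*, y^{LP} = y*, s^{LP}_i = ε*_i / x̂_i for i ∈ I, s^{LP}_i = s*_i for i ∈ Ī. Then x^{LP} is primal feasible (A x^{LP} = b, x^{LP} ≥ 0), (y^{LP}, s^{LP}) is dual feasible (A^T y^{LP} + s^{LP} = c, s^{LP} ≥ 0), and complementary slackness holds: x^{LP}_i s^{LP}_i = 0 for all i. Hence x^{LP} is optimal for min{c^T x : Ax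 = b, x ≥ 0} and (y^{LP}, s^{LP}) is optimal for the dual. -/
open Matrix

/-!
The vector `s^{LP}` is a dual slack for `y*` by (op1)–(op2), it is nonnegative since `ε* ≥ 0`,
`x̂ > 0` on `I` and `s* ≥ 0` on `Ī`, and it is complementary to `x̂ - δ*` by (op5)–(op6).
For primal and dual feasible points the duality gap `c ⬝ x - b ⬝ y` equals `s ⬝ x`, so
complementary slackness closes the gap and weak duality gives optimality of both.
-/

section LinearProgramming

variable {R m n : Type*} [Fintype m] [Fintype n] {A : Matrix m n R} {b : m → R}
  {c x : n → R} {y : m → R} {s : n → R}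

theorem dotProduct_eq_add_slack_of_feasible [CommRing R] (hx : A *ᵥ x = b)
    (hys : Aᵀ *ᵥ y + s = c) : c ⬝ᵥ x = b ⬝ᵥ y + s ⬝ᵥ x := by
  rw [← hys, ← hx, add_dotProduct, mulVec_transpose, ← dotProduct_mulVec, dotProduct_comm]

theorem dotProduct_le_of_feasible [CommRing R] [PartialOrder R] [IsOrderedRing R]
    (hx : A *ᵥ x = b) (hx₀ : 0 ≤ x) (hys : Aᵀ *ᵥ y + s = c) (hs₀ : 0 ≤ s) :
    b ⬝ᵥ y ≤ c ⬝ᵥ x := by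
  rw [dotProduct_eq_add_slack_of_feasible hx hys]
  exact le_add_of_nonneg_right (dotProduct_nonneg_of_nonneg hs₀ hx₀)

theorem dotProduct_eq_of_complementary [CommRing R] (hx : A *ᵥ x = b)
    (hys : Aᵀ *ᵥ y + s = c) (hxs : ∀ i, x i * s i = 0) : c ⬝ᵥ x = b ⬝ᵥ y := by
  have hgap : s ⬝ᵥ x = 0 := Finset.sum_eq_zero fun i _ => by rw [mul_comm, hxs i]
  rw [dotProduct_eq_add_slack_of_feasible hx hys, hgap, add_zero]

end LinearProgramming

/-- Theorem 2: from a solution of the KKT-type system (op1)-(op6) one recovers a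
primal-dual optimal pair of the LP relaxation. -/
theorem stmt_1 (m n : ℕ) (A : Matrix (Fin m) (Fin n) ℝ) (b : Fin m → ℝ) (c : Fin n → ℝ)
    (xhat : Fin n → ℝ) (hfeas : A.mulVec xhat = b) (hnn : ∀ i, 0 ≤ xhat i)
    (δ : Fin n → ℝ) (y : Fin m → ℝ) (s ε : Fin n → ℝ)
    (hop1 : ∀ i, 0 < xhat i → Aᵀ.mulVec y i + ε i / xhat i = c i)
    (hop2 : ∀ i, xhat i = 0 → Aᵀ.mulVec y i + s i = c i ∧ 0 ≤ s i)
    (hop3 : A.mulVec δ = 0)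
    (hop4 : ∀ i, δ i ≤ xhat i)
    (hop5 : ∀ i, xhat i = 0 → δ i * s i = 0)
    (hop6 : ∀ i, 0 < xhat i → ε i * (xhat i - δ i) = 0)
    (hε : ∀ i, 0 ≤ ε i)
    (xLP : Fin n → ℝ) (hxLP : xLP = xhat - δ)
    (yLP : Fin m → ℝ) (hyLP : yLP = y)
    (sLP : Fin n → ℝ) (hsLP : ∀ i, sLP i = if 0 < xhat i then ε i / xhat i else s i) :
    -- primal feasibility
    (A.mulVec xLP = b ∧ ∀ i, 0 ≤ xLP i) ∧
    -- dual feasibility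
    ((∀ i, Aᵀ.mulVec yLP i + sLP i = c i) ∧ ∀ i, 0 ≤ sLP i) ∧
    -- complementary slackness
    (∀ i, xLP i * sLP i = 0) ∧
    -- primal optimality
    (∀ x : Fin n → ℝ, A.mulVec x = b → (∀ i, 0 ≤ x i) →
      dotProduct c xLP ≤ dotProduct c x) ∧
    -- dual optimality
    (∀ (y' : Fin m → ℝ) (s' : Fin n → ℝ),
      (∀ i, Aᵀ.mulVec y' i + s' i = c i) → (∀ i, 0 ≤ s' i) →
      dotProduct b y' ≤ dotProduct b yLP) := by
  subst hxLP hyLP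
  have hprimal : A *ᵥ (xhat - δ) = b := by rw [mulVec_sub, hfeas, hop3, sub_zero]
  have hprimal₀ : ∀ i, 0 ≤ (xhat - δ) i := fun i => sub_nonneg.2 (hop4 i)
  have hcoord : ∀ i, ((Aᵀ *ᵥ yLP) i + sLP i = c i ∧ 0 ≤ sLP i) ∧ (xhat - δ) i * sLP i = 0 := by
    intro i
    rw [hsLP i, Pi.sub_apply]
    rcases (hnn i).lt_or_eq with hpos | hzero
    · rw [if_pos hpos, mul_div_assoc', mul_comm, hop6 i hpos, zero_div]
      exact ⟨⟨hop1 i hpos, div_nonneg (hε i) hpos.le⟩, rfl⟩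
    · rw [if_neg hzero.symm.le.not_gt, ← hzero, zero_sub, neg_mul, hop5 i hzero.symm, neg_zero]
      exact ⟨hop2 i hzero.symm, rfl⟩
  have hdual : Aᵀ *ᵥ yLP + sLP = c := funext fun i => (hcoord i).1.1
  have hval : c ⬝ᵥ (xhat - δ) = b ⬝ᵥ yLP :=
    dotProduct_eq_of_complementary hprimal hdual fun i => (hcoord i).2
  refine ⟨⟨hprimal, hprimal₀⟩, ⟨fun i => (hcoord i).1.1, fun i => (hcoord i).1.2⟩,
    fun i => (hcoord i).2, fun x hx hx₀ => ?_, fun y' s' hys' hs'₀ => ?_⟩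
  · exact hval ▸ dotProduct_le_of_feasible hx hx₀ hdual fun i => (hcoord i).1.2
  · exact hval ▸ dotProduct_le_of_feasible hprimal hprimal₀ (funext hys') hs'₀
end

section
/- Let A ∈ ℝ^{m×n}, b ∈ ℝ^m, and let x̂ > 0 satisfy A x̂ = b. Suppose (ŷ, ε̂) solves the system A^T ŷ + X̂^{-1} ε̂ = c̊ with ε̂ ≥ 0, where X̂ = diag(x̂). For any σ ∈ ℝ^n with 0 < σ_i < ε̂_i / x̂_i for all i, set c = c̊ - σ. Then there exists a dual feasible pair for the LP min{c^T x : Ax = b, x ≥ 0} (namely ŷ together with slack ŝ - σ where ŝ = X̂^{-1} ε̂), and x̂ is within Σ_{i=1}^n (ε̂_i - σ_i x̂_i) of the optimal value of min{c^T x : Ax = b, x ≥ 0}. -/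
/-! The slack `ŝ - σ` stays nonnegative because `σ < ε̂ / x̂`, so `(ŷ, ŝ - σ)` is dual feasible for
the cost `c̊ - σ`, and weak duality bounds the optimality gap of `x̂` by the complementarity
`(ŝ - σ) ⬝ᵥ x̂ = Σ_i (ε̂_i - σ_i x̂_i)`. -/

open Matrix

section WeakDuality

variable {ι κ R : Type*} [Fintype ι] [Fintype κ]

theorem dotProduct_eq_of_transpose_mulVec_add_eq [CommSemiring R] (A : Matrix κ ι R)
    {y : κ → R} {s c : ι → R} (hdual : Aᵀ *ᵥ y + s = c) (x : ι → R) :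
    c ⬝ᵥ x = y ⬝ᵥ (A *ᵥ x) + s ⬝ᵥ x := by
  rw [← hdual, add_dotProduct, mulVec_transpose, dotProduct_mulVec]

theorem dotProduct_sub_le_of_dual_feasible [CommRing R] [PartialOrder R] [IsOrderedRing R]
    (A : Matrix κ ι R) {b : κ → R} {y : κ → R} {s c xhat x : ι → R}
    (hdual : Aᵀ *ᵥ y + s = c) (hs : 0 ≤ s) (hxhat : A *ᵥ xhat = b) (hx : A *ᵥ x = b)
    (hx0 : 0 ≤ x) : c ⬝ᵥ xhat - s ⬝ᵥ xhat ≤ c ⬝ᵥ x := by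
  rw [dotProduct_eq_of_transpose_mulVec_add_eq A hdual xhat,
    dotProduct_eq_of_transpose_mulVec_add_eq A hdual x, hxhat, hx, add_sub_cancel_right]
  exact le_add_of_nonneg_right (dotProduct_nonneg_of_nonneg hs hx0)

end WeakDuality

theorem stmt_5_general (m n : ℕ) (A : Matrix (Fin m) (Fin n) ℝ) (b : Fin m → ℝ) (cring : Fin n → ℝ)
    (xhat : Fin n → ℝ) (hpos : ∀ i, 0 < xhat i) (hfeas : A.mulVec xhat = b)
    (yhat : Fin m → ℝ) (εhat : Fin n → ℝ)
    (hsys : ∀ i, Aᵀ.mulVec yhat i + εhat i / xhat i = cring i)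
    (σ : Fin n → ℝ) (hσ : ∀ i, 0 < σ i ∧ σ i < εhat i / xhat i)
    (shat : Fin n → ℝ) (hshat : ∀ i, shat i = εhat i / xhat i)
    (c : Fin n → ℝ) (hc : c = cring - σ) :
    -- (ŷ, ŝ - σ) is dual feasible for min { c^T x : Ax = b, x ≥ 0 }
    ((∀ i, Aᵀ.mulVec yhat i + (shat i - σ i) = c i) ∧ ∀ i, 0 ≤ shat i - σ i) ∧
    -- x̂ is within Σ_i (ε̂_i - σ_i x̂_i) of the optimal value
    (∀ x : Fin n → ℝ, A.mulVec x = b → (∀ i, 0 ≤ x i) →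
      dotProduct c xhat - ∑ i, (εhat i - σ i * xhat i) ≤ dotProduct c x) := by
  have hdual : Aᵀ *ᵥ yhat + (shat - σ) = c := by
    ext i
    rw [hc, Pi.add_apply, Pi.sub_apply, Pi.sub_apply, hshat i, ← hsys i, add_sub_assoc]
  have hs : 0 ≤ shat - σ := fun i => sub_nonneg.mpr (hshat i ▸ (hσ i).2.le)
  have hgap : (shat - σ) ⬝ᵥ xhat = ∑ i, (εhat i - σ i * xhat i) :=
    Finset.sum_congr rfl fun i _ => by
      rw [Pi.sub_apply, hshat i, sub_mul, div_mul_cancel₀ _ (hpos i).ne']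
  refine ⟨⟨fun i => congrFun hdual i, hs⟩, fun x hx hx0 => ?_⟩
  rw [← hgap]
  exact dotProduct_sub_le_of_dual_feasible A hdual hs hfeas hx hx0

/-- Trade-off result: perturbing the reference cost c̊ by σ gives a cost c = c̊ - σ
for which (ŷ, ŝ - σ) is dual feasible and x̂ is Σ_i (ε̂_i - σ_i x̂_i)-optimal. -/
theorem stmt_5 (m n : ℕ) (A : Matrix (Fin m) (Fin n) ℝ) (b : Fin m → ℝ) (cring : Fin n → ℝ)
    (xhat : Fin n → ℝ) (hpos : ∀ i, 0 < xhat i) (hfeas : A.mulVec xhat = b)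
    (yhat : Fin m → ℝ) (εhat : Fin n → ℝ)
    (hsys : ∀ i, Aᵀ.mulVec yhat i + εhat i / xhat i = cring i)
    (hεhat : ∀ i, 0 ≤ εhat i)
    (σ : Fin n → ℝ) (hσ : ∀ i, 0 < σ i ∧ σ i < εhat i / xhat i)
    (shat : Fin n → ℝ) (hshat : ∀ i, shat i = εhat i / xhat i)
    (c : Fin n → ℝ) (hc : c = cring - σ) :
    -- (ŷ, ŝ - σ) is dual feasible for min { c^T x : Ax = b, x ≥ 0 }
    ((∀ i, Aᵀ.mulVec yhat i + (shat i - σ i) = c i) ∧ ∀ i, 0 ≤ shat i - σ i) ∧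
    -- x̂ is within Σ_i (ε̂_i - σ_i x̂_i) of the optimal value
    (∀ x : Fin n → ℝ, A.mulVec x = b → (∀ i, 0 ≤ x i) →
      dotProduct c xhat - ∑ i, (εhat i - σ i * xhat i) ≤ dotProduct c x) :=
  stmt_5_general m n A b cring xhat hpos hfeas yhat εhat hsys σ hσ shat hshat c hc
end

section
/- Let A ∈ ℝ^{m×n}, let x̂ ∈ ℝ^n and σ̂ ∈ ℝ^m satisfy x̂ > 0 and σ̂ > 0 componentwise (so (x̂, σ̂) is strictly interior for Ax + σ = b, x, σ ≥ 0). Then the optimal objective value of [IOP2(x̂, σ̂)]: minimize Σ_{i=1}^n ε_i + Σ_{i=1}^m ε^σ_i subject to a_i^T y + ε_i/x̂_i = c_i for i = 1,...,n; y_i + ε^σ_i/σ̂_i = 0 for i = 1,...,m; ‖c‖₁ = 1; ε ≥ 0, ε^σ ≥ 0; equals min{ min_{1≤i≤n} x̂_i , min_{1≤i≤m} σ̂_i / ‖a_i‖₁ }, where a_i in the second minimum denotes the i-th row of A. -/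
/-!
Every feasible point of [IOP2] has `σhat i * |y i| = εσ i`. With `V` the claimed minimum,
`V ≤ xhat j` and `V ‖aᵢ‖₁ ≤ σhat i`, so
`V = V ∑ |c j| ≤ V ∑ᵢ ‖aᵢ‖₁ |y i| + V ∑ⱼ ε j / xhat j ≤ ∑ᵢ εσ i + ∑ⱼ ε j`.
The bound is attained by putting all the error on the coordinate realising the minimum:
`c = eⱼ, ε = xhat j • eⱼ` for a column, or `c = -aᵢ / ‖aᵢ‖₁, y = -eᵢ / ‖aᵢ‖₁` for a row.
-/

open Matrix

section InverseOptimization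

variable {ι κ : Type*} [Fintype ι] [Fintype κ]

/-- The objective values of the feasible points of [IOP2(xhat, σhat)]. -/
def iop2Values (A : Matrix ι κ ℝ) (xhat : κ → ℝ) (σhat : ι → ℝ) : Set ℝ :=
  {v : ℝ | ∃ (y : ι → ℝ) (c ε : κ → ℝ) (εσ : ι → ℝ),
    (∀ j, Aᵀ.mulVec y j + ε j / xhat j = c j) ∧
    (∀ i, y i + εσ i / σhat i = 0) ∧
    (∑ j, |c j| = 1) ∧
    (∀ j, 0 ≤ ε j) ∧ (∀ i, 0 ≤ εσ i) ∧
    v = ∑ j, ε j + ∑ i, εσ i}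

theorem sum_abs_transpose_mulVec_le (A : Matrix ι κ ℝ) (y : ι → ℝ) :
    ∑ j, |(Aᵀ *ᵥ y) j| ≤ ∑ i, (∑ j, |A i j|) * |y i| := by
  calc ∑ j, |(Aᵀ *ᵥ y) j| ≤ ∑ j, ∑ i, |A i j| * |y i| := by
        refine Finset.sum_le_sum fun j _ => (Finset.abs_sum_le_sum_abs _ _).trans_eq ?_
        simp only [transpose_apply, abs_mul]
    _ = ∑ i, (∑ j, |A i j|) * |y i| := by
        rw [Finset.sum_comm]
        simp only [Finset.sum_mul]

theorem le_of_mem_iop2Values {A : Matrix ι κ ℝ} {xhat : κ → ℝ} {σhat : ι → ℝ}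
    (hx : ∀ j, 0 < xhat j) (hσ : ∀ i, 0 < σhat i) {V : ℝ} (hV : 0 ≤ V)
    (hVx : ∀ j, V ≤ xhat j) (hVσ : ∀ i, V * ∑ j, |A i j| ≤ σhat i)
    {v : ℝ} (hv : v ∈ iop2Values A xhat σhat) : V ≤ v := by
  obtain ⟨y, c, ε, εσ, hc, hy, hc1, hε, hεσ, rfl⟩ := hv
  have hεσ_eq : ∀ i, εσ i = σhat i * |y i| := fun i => by
    rw [show y i = -(εσ i / σhat i) by linarith [hy i], abs_neg,
      abs_of_nonneg (div_nonneg (hεσ i) (hσ i).le), mul_div_cancel₀ _ (hσ i).ne']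
  have hc_le : ∑ j, |c j| ≤ ∑ i, (∑ j, |A i j|) * |y i| + ∑ j, ε j / xhat j := by
    calc ∑ j, |c j| ≤ ∑ j, (|(Aᵀ *ᵥ y) j| + ε j / xhat j) := by
          refine Finset.sum_le_sum fun j _ => ?_
          rw [← hc j]
          exact (abs_add_le _ _).trans_eq
            (by rw [abs_of_nonneg (div_nonneg (hε j) (hx j).le)])
      _ ≤ _ := by
          rw [Finset.sum_add_distrib]
          gcongr
          exact sum_abs_transpose_mulVec_le A y
  calc V = V * ∑ j, |c j| := by rw [hc1, mul_one]
    _ ≤ V * (∑ i, (∑ j, |A i j|) * |y i| + ∑ j, ε j / xhat j) :=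
        mul_le_mul_of_nonneg_left hc_le hV
    _ = ∑ i, V * (∑ j, |A i j|) * |y i| + ∑ j, V / xhat j * ε j := by
        rw [mul_add, Finset.mul_sum, Finset.mul_sum]
        congr 1 <;> refine Finset.sum_congr rfl fun _ _ => by ring
    _ ≤ ∑ i, σhat i * |y i| + ∑ j, 1 * ε j := by
        gcongr with i _ j _
        · exact hVσ i
        · exact hε j
        · exact div_le_one_of_le₀ (hVx j) (hx j).le
    _ = ∑ j, ε j + ∑ i, εσ i := by simp only [one_mul, hεσ_eq]; ring

theorem mem_iop2Values_of_column [DecidableEq κ] (A : Matrix ι κ ℝ) {xhat : κ → ℝ}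
    (σhat : ι → ℝ) {j₀ : κ} (hx : 0 < xhat j₀) : xhat j₀ ∈ iop2Values A xhat σhat := by
  refine ⟨0, Pi.single j₀ 1, Pi.single j₀ (xhat j₀), 0, fun j => ?_, fun i => by simp,
    ?_, fun j => ?_, fun i => le_rfl, by simp⟩
  · rcases eq_or_ne j j₀ with rfl | hj
    · simp [hx.ne']
    · simp [hj]
  · simp [Pi.single_apply, apply_ite abs]
  · rcases eq_or_ne j j₀ with rfl | hj
    · simpa using hx.le
    · simp [hj]

theorem mem_iop2Values_of_row [DecidableEq ι] (A : Matrix ι κ ℝ) (xhat : κ → ℝ)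
    {σhat : ι → ℝ} {i₀ : ι} (hσ : 0 < σhat i₀) (hrow : ∑ j, |A i₀ j| ≠ 0) :
    σhat i₀ / ∑ j, |A i₀ j| ∈ iop2Values A xhat σhat := by
  set s := ∑ j, |A i₀ j| with hs
  have hs_pos : 0 < s := lt_of_le_of_ne (Finset.sum_nonneg fun j _ => abs_nonneg _) hrow.symm
  refine ⟨Pi.single i₀ (-1 / s), fun j => -A i₀ j / s, 0, Pi.single i₀ (σhat i₀ / s),
    fun j => ?_, fun i => ?_, ?_, fun j => le_rfl, fun i => ?_, by simp⟩
  · simp [mulVec_single, div_eq_mul_inv]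
  · rcases eq_or_ne i i₀ with rfl | hi
    · simp only [Pi.single_eq_same]
      field_simp
      ring
    · simp [hi]
  · simp_rw [abs_div, abs_neg, abs_of_pos hs_pos, ← Finset.sum_div, ← hs]
    exact div_self hrow
  · rcases eq_or_ne i i₀ with rfl | hi
    · simpa using div_nonneg hσ.le hs_pos.le
    · simp [hi]

end InverseOptimization

/-- Proposition 4(a): for a strictly interior point (x̂, σ̂), the optimal value of
[IOP2(x̂, σ̂)] equals min{ min_i x̂_i, min_i σ̂_i/‖a_i‖₁ }. -/
theorem stmt_8 (m n : ℕ) (hn : 0 < n) (hm : 0 < m)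
    (A : Matrix (Fin m) (Fin n) ℝ) (hrows : ∀ i, ∑ j, |A i j| ≠ 0)
    (xhat : Fin n → ℝ) (hx : ∀ j, 0 < xhat j)
    (σhat : Fin m → ℝ) (hσ : ∀ i, 0 < σhat i) :
    IsLeast
      {v : ℝ | ∃ (y : Fin m → ℝ) (c ε : Fin n → ℝ) (εσ : Fin m → ℝ),
        (∀ j, Aᵀ.mulVec y j + ε j / xhat j = c j) ∧
        (∀ i, y i + εσ i / σhat i = 0) ∧
        (∑ j, |c j| = 1) ∧
        (∀ j, 0 ≤ ε j) ∧ (∀ i, 0 ≤ εσ i) ∧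
        v = ∑ j, ε j + ∑ i, εσ i}
      (min (⨅ j : Fin n, xhat j) (⨅ i : Fin m, σhat i / ∑ j, |A i j|)) := by
  have : Nonempty (Fin n) := ⟨⟨0, hn⟩⟩
  have : Nonempty (Fin m) := ⟨⟨0, hm⟩⟩
  have hrow_pos (i : Fin m) : 0 < ∑ j, |A i j| :=
    lt_of_le_of_ne (Finset.sum_nonneg fun j _ => abs_nonneg _) (hrows i).symm
  change IsLeast (iop2Values A xhat σhat) _
  refine ⟨?_, fun v hv => le_of_mem_iop2Values hx hσ ?_ (fun j => ?_) (fun i => ?_) hv⟩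
  · rcases min_choice (⨅ j, xhat j) (⨅ i, σhat i / ∑ j, |A i j|) with h | h <;> rw [h]
    · obtain ⟨j, hj⟩ := exists_eq_ciInf_of_finite (f := xhat)
      exact hj ▸ mem_iop2Values_of_column A σhat (hx j)
    · obtain ⟨i, hi⟩ := exists_eq_ciInf_of_finite (f := fun i => σhat i / ∑ j, |A i j|)
      exact hi ▸ mem_iop2Values_of_row A xhat (hσ i) (hrows i)
  · exact le_min (le_ciInf fun j => (hx j).le)
      (le_ciInf fun i => (div_pos (hσ i) (hrow_pos i)).le)
  · exact (min_le_left _ _).trans (ciInf_le (Finite.bddBelow_range _) j)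
  · exact (le_div_iff₀ (hrow_pos i)).mp
      ((min_le_right _ _).trans (ciInf_le (Finite.bddBelow_range _) i))
end

section
/- Under the hypotheses of Proposition 4 (x̂ > 0, σ̂ > 0), if min_{1≤i≤n} x̂_i ≤ min_{1≤i≤m} σ̂_i/‖a_i‖₁ and p attains min_{1≤i≤n} x̂_i, then y* = 0, c* = e_p, ε*_p = x̂_p, ε*_i = 0 for i ≠ p, ε^{σ*} = 0 is feasible for [IOP2(x̂, σ̂)] with objective value x̂_p, and no feasible solution has a strictly smaller objective. -/
/-! For a feasible point, `1 = ‖c‖₁ ≤ ‖Aᵀy‖₁ + ∑ⱼ εⱼ / x̂ⱼ`. The constraint on `y` gives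
`σ̂ᵢ |yᵢ| = ε^σᵢ`, so `x̂_p ‖Aᵀy‖₁ ≤ ∑ᵢ x̂_p ‖aᵢ‖₁ |yᵢ| ≤ ∑ᵢ ε^σᵢ` by the case hypothesis
`x̂_p ‖aᵢ‖₁ ≤ σ̂ᵢ`, while `x̂_p ≤ x̂ⱼ` gives `x̂_p ∑ⱼ εⱼ / x̂ⱼ ≤ ∑ⱼ εⱼ`. Hence every feasible
objective is at least `x̂_p`, which the point `(0, e_p, x̂_p e_p, 0)` attains. -/

open Matrix Finset

section

variable {𝕜 m n : Type*} [Field 𝕜] [LinearOrder 𝕜] [IsStrictOrderedRing 𝕜] [Fintype m] [Fintype n]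

def IOP2Feasible (A : Matrix m n 𝕜) (xhat : n → 𝕜) (σhat : m → 𝕜)
    (y : m → 𝕜) (c ε : n → 𝕜) (εσ : m → 𝕜) : Prop :=
  (∀ j, Aᵀ.mulVec y j + ε j / xhat j = c j) ∧
  (∀ i, y i + εσ i / σhat i = 0) ∧
  (∑ j, |c j| = 1) ∧
  (∀ j, 0 ≤ ε j) ∧ (∀ i, 0 ≤ εσ i)

theorem iop2Feasible_single [DecidableEq n] (A : Matrix m n 𝕜) (xhat : n → 𝕜) (σhat : m → 𝕜)
    (p : n) (hp : 0 < xhat p) :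
    IOP2Feasible A xhat σhat 0 (Pi.single p 1) (Pi.single p (xhat p)) 0 := by
  refine ⟨fun j => ?_, fun i => by simp, ?_, fun j => ?_, fun i => le_rfl⟩
  · rcases eq_or_ne j p with rfl | hj
    · simp [hp.ne']
    · simp [hj]
  · rw [sum_eq_single p (fun j _ hj => by simp [hj]) (by simp)]
    simp
  · rcases eq_or_ne j p with rfl | hj
    · simpa using hp.le
    · simp [hj]

theorem sum_abs_mulVec_transpose_le (A : Matrix m n 𝕜) (y : m → 𝕜) :
    ∑ j, |Aᵀ.mulVec y j| ≤ ∑ i, (∑ j, |A i j|) * |y i| :=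
  calc ∑ j, |Aᵀ.mulVec y j| = ∑ j, |∑ i, A i j * y i| := by
        simp only [mulVec, dotProduct, transpose_apply]
    _ ≤ ∑ j, ∑ i, |A i j| * |y i| :=
        sum_le_sum fun j _ => (abs_sum_le_sum_abs _ _).trans_eq (by simp only [abs_mul])
    _ = ∑ i, (∑ j, |A i j|) * |y i| := by
        rw [sum_comm]
        simp only [sum_mul]

theorem mul_sum_abs_mulVec_transpose_le {A : Matrix m n 𝕜} {σhat : m → 𝕜} {w : 𝕜} (y : m → 𝕜)
    (hw : 0 ≤ w) (hwσ : ∀ i, w * ∑ j, |A i j| ≤ σhat i) :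
    w * ∑ j, |Aᵀ.mulVec y j| ≤ ∑ i, σhat i * |y i| :=
  calc w * ∑ j, |Aᵀ.mulVec y j| ≤ w * ∑ i, (∑ j, |A i j|) * |y i| :=
        mul_le_mul_of_nonneg_left (sum_abs_mulVec_transpose_le A y) hw
    _ = ∑ i, (w * ∑ j, |A i j|) * |y i| := by
        rw [mul_sum]
        simp only [mul_assoc]
    _ ≤ ∑ i, σhat i * |y i| :=
        sum_le_sum fun i _ => mul_le_mul_of_nonneg_right (hwσ i) (abs_nonneg _)

theorem mul_sum_div_le_sum {xhat ε : n → 𝕜} {w : 𝕜} (hx : ∀ j, 0 < xhat j)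
    (hwx : ∀ j, w ≤ xhat j) (hε : ∀ j, 0 ≤ ε j) :
    w * ∑ j, ε j / xhat j ≤ ∑ j, ε j := by
  rw [mul_sum]
  refine sum_le_sum fun j _ => ?_
  calc w * (ε j / xhat j) ≤ xhat j * (ε j / xhat j) :=
        mul_le_mul_of_nonneg_right (hwx j) (div_nonneg (hε j) (hx j).le)
    _ = ε j := mul_div_cancel₀ _ (hx j).ne'

theorem mul_abs_eq_of_add_div_eq_zero {y e s : 𝕜} (h : y + e / s = 0) (he : 0 ≤ e) (hs : 0 < s) :
    s * |y| = e := by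
  rw [eq_neg_of_add_eq_zero_left h, abs_neg, abs_of_nonneg (div_nonneg he hs.le),
    mul_div_cancel₀ _ hs.ne']

theorem IOP2Feasible.le_objective {A : Matrix m n 𝕜} {xhat : n → 𝕜} {σhat : m → 𝕜}
    {y : m → 𝕜} {c ε : n → 𝕜} {εσ : m → 𝕜} {w : 𝕜}
    (hf : IOP2Feasible A xhat σhat y c ε εσ) (hx : ∀ j, 0 < xhat j) (hσ : ∀ i, 0 < σhat i)
    (hw : 0 ≤ w) (hwx : ∀ j, w ≤ xhat j) (hwσ : ∀ i, w * ∑ j, |A i j| ≤ σhat i) :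
    w ≤ ∑ j, ε j + ∑ i, εσ i := by
  obtain ⟨hcons, hcons_σ, hc, hε, hεσ⟩ := hf
  have hc_le : 1 ≤ ∑ j, |Aᵀ.mulVec y j| + ∑ j, ε j / xhat j := by
    rw [← hc, ← sum_add_distrib]
    refine sum_le_sum fun j _ => ?_
    rw [← hcons j]
    exact (abs_add_le _ _).trans_eq (congrArg _ (abs_of_nonneg (div_nonneg (hε j) (hx j).le)))
  have hεσ_eq : ∑ i, σhat i * |y i| = ∑ i, εσ i :=
    sum_congr rfl fun i _ => mul_abs_eq_of_add_div_eq_zero (hcons_σ i) (hεσ i) (hσ i)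
  calc w ≤ w * (∑ j, |Aᵀ.mulVec y j| + ∑ j, ε j / xhat j) := le_mul_of_one_le_right hw hc_le
    _ = w * ∑ j, |Aᵀ.mulVec y j| + w * ∑ j, ε j / xhat j := mul_add _ _ _
    _ ≤ ∑ i, εσ i + ∑ j, ε j :=
        add_le_add ((mul_sum_abs_mulVec_transpose_le y hw hwσ).trans_eq hεσ_eq)
          (mul_sum_div_le_sum hx hwx hε)
    _ = ∑ j, ε j + ∑ i, εσ i := add_comm _ _

end

theorem stmt_10_general (m n : ℕ) (A : Matrix (Fin m) (Fin n) ℝ)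
    (xhat : Fin n → ℝ) (hx : ∀ j, 0 < xhat j)
    (σhat : Fin m → ℝ) (hσ : ∀ i, 0 < σhat i)
    (p : Fin n)
    (hpmin : ∀ j, xhat p ≤ xhat j)
    (hcase : ∀ i, xhat p ≤ σhat i / ∑ j, |A i j|)
    (ystar : Fin m → ℝ) (hy : ystar = 0)
    (cstar : Fin n → ℝ) (hc : cstar = fun j => if j = p then 1 else 0)
    (εstar : Fin n → ℝ) (hε : εstar = fun j => if j = p then xhat p else 0)
    (εσstar : Fin m → ℝ) (hεσ : εσstar = 0) :
    -- feasibility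
    ((∀ j, Aᵀ.mulVec ystar j + εstar j / xhat j = cstar j) ∧
     (∀ i, ystar i + εσstar i / σhat i = 0) ∧
     (∑ j, |cstar j| = 1) ∧
     (∀ j, 0 ≤ εstar j) ∧ (∀ i, 0 ≤ εσstar i)) ∧
    -- objective value
    (∑ j, εstar j + ∑ i, εσstar i = xhat p) ∧
    -- no feasible solution has a strictly smaller objective
    (∀ (y : Fin m → ℝ) (c ε : Fin n → ℝ) (εσ : Fin m → ℝ),
      (∀ j, Aᵀ.mulVec y j + ε j / xhat j = c j) →
      (∀ i, y i + εσ i / σhat i = 0) →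
      (∑ j, |c j| = 1) →
      (∀ j, 0 ≤ ε j) → (∀ i, 0 ≤ εσ i) →
      xhat p ≤ ∑ j, ε j + ∑ i, εσ i) := by
  have hc' : cstar = Pi.single p 1 := hc ▸ funext fun j => (Pi.single_apply p 1 j).symm
  have hε' : εstar = Pi.single p (xhat p) := hε ▸ funext fun j => (Pi.single_apply p _ j).symm
  subst hy hc' hε' hεσ
  have hwσ (i : Fin m) : xhat p * ∑ j, |A i j| ≤ σhat i :=
    mul_le_of_le_div₀ (hσ i).le (sum_nonneg fun j _ => abs_nonneg _) (hcase i)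
  exact ⟨iop2Feasible_single A xhat σhat p (hx p), by simp,
    fun y c ε εσ h₁ h₂ h₃ h₄ h₅ => IOP2Feasible.le_objective ⟨h₁, h₂, h₃, h₄, h₅⟩ hx hσ
      (hx p).le hpmin hwσ⟩

/-- Proposition 4(c): when the primal-variable bound dominates, the closed-form
solution y* = 0, c* = e_p, ε*_p = x̂_p (0 elsewhere), ε^σ* = 0 is feasible for
[IOP2(x̂, σ̂)] with objective x̂_p, and no feasible solution does strictly better. -/
theorem stmt_10 (m n : ℕ) (A : Matrix (Fin m) (Fin n) ℝ) (hrows : ∀ i, ∑ j, |A i j| ≠ 0)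
    (xhat : Fin n → ℝ) (hx : ∀ j, 0 < xhat j)
    (σhat : Fin m → ℝ) (hσ : ∀ i, 0 < σhat i)
    (p : Fin n)
    (hpmin : ∀ j, xhat p ≤ xhat j)
    (hcase : ∀ i, xhat p ≤ σhat i / ∑ j, |A i j|)
    (ystar : Fin m → ℝ) (hy : ystar = 0)
    (cstar : Fin n → ℝ) (hc : cstar = fun j => if j = p then 1 else 0)
    (εstar : Fin n → ℝ) (hε : εstar = fun j => if j = p then xhat p else 0)
    (εσstar : Fin m → ℝ) (hεσ : εσstar = 0) :
    -- feasibility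
    ((∀ j, Aᵀ.mulVec ystar j + εstar j / xhat j = cstar j) ∧
     (∀ i, ystar i + εσstar i / σhat i = 0) ∧
     (∑ j, |cstar j| = 1) ∧
     (∀ j, 0 ≤ εstar j) ∧ (∀ i, 0 ≤ εσstar i)) ∧
    -- objective value
    (∑ j, εstar j + ∑ i, εσstar i = xhat p) ∧
    -- no feasible solution has a strictly smaller objective
    (∀ (y : Fin m → ℝ) (c ε : Fin n → ℝ) (εσ : Fin m → ℝ),
      (∀ j, Aᵀ.mulVec y j + ε j / xhat j = c j) →
      (∀ i, y i + εσ i / σhat i = 0) →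
      (∑ j, |c j| = 1) →
      (∀ j, 0 ≤ ε j) → (∀ i, 0 ≤ εσ i) →
      xhat p ≤ ∑ j, ε j + ∑ i, εσ i) :=
  stmt_10_general m n A xhat hx σhat hσ p hpmin hcase ystar hy cstar hc εstar hε εσstar hεσ
end

section
/- Let A ∈ ℝ^{m×n}, b ∈ ℝ^m, c ∈ ℝ^n, and let x̂ be feasible for the mixed integer program min{c^T x : Ax = b, x ≥ 0, x_j ∈ ℤ for j ∈ J̄}. Suppose (y, ε, s) is feasible for the lower-level LP: (A^T y)_i + ε_i/x̂_i = c_i for i ∈ I = {i : x̂_i > 0}, (A^T y)_i + s_i = c_i with s_i ≥ 0 for i ∈ Ī, ε ≥ 0. Then the optimal value z* of the mixed integer program satisfies c^T x̂ - Σ_{i ∈ I} ε_i ≤ z* ≤ c^T x̂; i.e., x̂ is (Σ_{i ∈ I} ε_i)-optimal for the forward MIP. -/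
open Matrix

/-!
Write `r = c - Aᵀ y` for the reduced costs. The certificate makes `r ≥ 0` (so `y` is dual feasible
for the LP relaxation) and `r i * x̂ i = ε i` on the support `I` of `x̂`. For every `x` with
`A x = b` the gap `c ⬝ x - y ⬝ b` equals `r ⬝ x`: it is nonnegative when `x ≥ 0` (weak duality,
giving `y ⬝ b ≤ z*`), and it equals `∑_{i ∈ I} ε i` at `x̂` (complementary slackness). The upper
bound `z* ≤ c ⬝ x̂` holds because `x̂` is MIP-feasible.
-/

section Duality

variable {R m n : Type*} {A : Matrix m n R} {b : m → R} {c x : n → R} {y : m → R}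

theorem dotProduct_sub_dotProduct_eq_reducedCost [CommRing R] [Fintype m] [Fintype n]
    (hx : A *ᵥ x = b) :
    c ⬝ᵥ x - y ⬝ᵥ b = (c - Aᵀ *ᵥ y) ⬝ᵥ x := by
  rw [← hx, dotProduct_mulVec, ← mulVec_transpose, sub_dotProduct]

theorem dotProduct_le_dotProduct_of_transpose_mulVec_le [CommRing R] [PartialOrder R] [IsOrderedRing R] [Fintype m]
    [Fintype n] (hx : A *ᵥ x = b) (hx₀ : 0 ≤ x) (hy : Aᵀ *ᵥ y ≤ c) :
    y ⬝ᵥ b ≤ c ⬝ᵥ x := by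
  have hgap := dotProduct_nonneg_of_nonneg (sub_nonneg.mpr hy) hx₀
  rw [← dotProduct_sub_dotProduct_eq_reducedCost hx] at hgap
  exact sub_nonneg.mp hgap

variable {ε s : n → R}

theorem transpose_mulVec_le_of_certificate [Field R] [LinearOrder R] [IsStrictOrderedRing R]
    [Fintype m] (hx₀ : ∀ i, 0 ≤ x i)
    (h1 : ∀ i, 0 < x i → (Aᵀ *ᵥ y) i + ε i / x i = c i)
    (h2 : ∀ i, x i = 0 → (Aᵀ *ᵥ y) i + s i = c i ∧ 0 ≤ s i) (hε : ∀ i, 0 ≤ ε i) :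
    Aᵀ *ᵥ y ≤ c := by
  intro i
  rcases (hx₀ i).lt_or_eq with hpos | hzero
  · rw [← h1 i hpos]
    exact le_add_of_nonneg_right (div_nonneg (hε i) (hx₀ i))
  · obtain ⟨hs, hs₀⟩ := h2 i hzero.symm
    rw [← hs]
    exact le_add_of_nonneg_right hs₀

theorem reducedCost_mul_of_certificate [Field R] [LinearOrder R] [Fintype m]
    (h1 : ∀ i, 0 < x i → (Aᵀ *ᵥ y) i + ε i / x i = c i)
    (hx₀ : ∀ i, 0 ≤ x i) (i : n) :
    (c - Aᵀ *ᵥ y) i * x i = if 0 < x i then ε i else 0 := by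
  split_ifs with hpos
  · rw [Pi.sub_apply, ← h1 i hpos, add_sub_cancel_left, div_mul_cancel₀ _ hpos.ne']
  · rw [le_antisymm (not_lt.mp hpos) (hx₀ i), mul_zero]

theorem dotProduct_sub_dotProduct_eq_sum_of_certificate [Field R] [LinearOrder R] [Fintype m]
    [Fintype n] (hx : A *ᵥ x = b)
    (hx₀ : ∀ i, 0 ≤ x i) (h1 : ∀ i, 0 < x i → (Aᵀ *ᵥ y) i + ε i / x i = c i) :
    c ⬝ᵥ x - y ⬝ᵥ b = ∑ i ∈ Finset.univ.filter (fun i => 0 < x i), ε i := by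
  rw [dotProduct_sub_dotProduct_eq_reducedCost hx, Finset.sum_filter]
  exact Finset.sum_congr rfl fun i _ => reducedCost_mul_of_certificate h1 hx₀ i

end Duality

/-- ε-optimality certificate for the forward MIP: if x̂ is MIP-feasible and
(y, ε, s) is feasible for the lower-level LP, then the MIP optimal value z*
satisfies c^T x̂ - Σ_{i ∈ I} ε_i ≤ z* ≤ c^T x̂. -/
theorem stmt_18 (m n : ℕ) (A : Matrix (Fin m) (Fin n) ℝ) (b : Fin m → ℝ) (c : Fin n → ℝ)
    (Jbar : Set (Fin n))
    (xhat : Fin n → ℝ)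
    (hfeas : A.mulVec xhat = b) (hnn : ∀ i, 0 ≤ xhat i)
    (hint : ∀ j ∈ Jbar, ∃ k : ℤ, xhat j = (k : ℝ))
    (y : Fin m → ℝ) (ε s : Fin n → ℝ)
    (h1 : ∀ i, 0 < xhat i → Aᵀ.mulVec y i + ε i / xhat i = c i)
    (h2 : ∀ i, xhat i = 0 → Aᵀ.mulVec y i + s i = c i ∧ 0 ≤ s i)
    (hε : ∀ i, 0 ≤ ε i)
    (zstar : ℝ)
    (hz : zstar = sInf {v : ℝ | ∃ x : Fin n → ℝ,
        A.mulVec x = b ∧ (∀ i, 0 ≤ x i) ∧ (∀ j ∈ Jbar, ∃ k : ℤ, x j = (k : ℝ)) ∧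
        v = dotProduct c x}) :
    dotProduct c xhat - ∑ i ∈ Finset.univ.filter (fun i => 0 < xhat i), ε i ≤ zstar ∧
    zstar ≤ dotProduct c xhat := by
  have hdual := transpose_mulVec_le_of_certificate hnn h1 h2 hε
  have hlower : ∀ v ∈ {v : ℝ | ∃ x : Fin n → ℝ, A.mulVec x = b ∧ (∀ i, 0 ≤ x i) ∧
      (∀ j ∈ Jbar, ∃ k : ℤ, x j = (k : ℝ)) ∧ v = dotProduct c x}, y ⬝ᵥ b ≤ v := by
    rintro _ ⟨x, hx, hx₀, -, rfl⟩
    exact dotProduct_le_dotProduct_of_transpose_mulVec_le hx hx₀ hdual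
  have hxhat : dotProduct c xhat ∈ {v : ℝ | ∃ x : Fin n → ℝ, A.mulVec x = b ∧
      (∀ i, 0 ≤ x i) ∧ (∀ j ∈ Jbar, ∃ k : ℤ, x j = (k : ℝ)) ∧ v = dotProduct c x} :=
    ⟨xhat, hfeas, hnn, hint, rfl⟩
  rw [← dotProduct_sub_dotProduct_eq_sum_of_certificate hfeas hnn h1, sub_sub_cancel, hz]
  exact ⟨le_csInf ⟨_, hxhat⟩ hlower, csInf_le ⟨_, hlower⟩ hxhat⟩
end
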